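/- arXiv:2503.23703 — 3 statements merged into one kernel-verified Lean document; each statement's English description precedes it below -/
import Mathlib

section
/- A tropical linear differential equation P = min_{0≤i≤k}{a_i + u^(i)} has a singleton solution {s} with s ≥ k if and only if the minimum in min_{0≤i≤k}{a_i + k - i} is attained at least twice. -/
/-- `tval S i` = min { s - i : s ∈ S, s ≥ i }, as an extended real (⊤ if no such s). -/
noncomputable def tval (S : Set ℕ) (i : ℕ) : EReal :=
  ⨅ (d : ℕ) (_ : i + d ∈ S), ((d : ℝ) : EReal)

/-- The term `a_i + val_S(i)` of the tropical linear differential equation. -/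
noncomputable def tterm (a : ℕ → ℤ) (S : Set ℕ) (i : ℕ) : EReal :=
  ((a i : ℝ) : EReal) + tval S i

/-- `min_{0 ≤ i ≤ k} { a_i + val_S(i) }`. -/
noncomputable def tmin (k : ℕ) (a : ℕ → ℤ) (S : Set ℕ) : EReal :=
  ⨅ i ∈ Finset.range (k + 1), tterm a S i

/-- `S` is a tropical solution: the minimum is attained at least twice
(this also covers the case where the minimum is `∞`, since `k ≥ 1`). -/
def IsSol (k : ℕ) (a : ℕ → ℤ) (S : Set ℕ) : Prop :=
  ∃ i ∈ Finset.range (k + 1), ∃ j ∈ Finset.range (k + 1),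
    i ≠ j ∧ tterm a S i = tmin k a S ∧ tterm a S j = tmin k a S

/-- A minimal tropical solution: nonempty, a solution, and no nonempty proper
subset is a solution. -/
def IsMinSol (k : ℕ) (a : ℕ → ℤ) (S : Set ℕ) : Prop :=
  S.Nonempty ∧ IsSol k a S ∧ ∀ T ⊆ S, T.Nonempty → IsSol k a T → T = S

open Finset

lemma tval_singleton_of_le {s i : ℕ} (h : i ≤ s) :
    tval {s} i = (((s - i : ℕ) : ℝ) : EReal) := by
  refine le_antisymm (iInf₂_le (s - i) (by simp [Nat.add_sub_cancel' h])) (le_iInf₂ fun d hd => ?_)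
  obtain rfl : d = s - i := by rw [Set.mem_singleton_iff] at hd; omega
  exact le_rfl

lemma tterm_singleton_of_le (a : ℕ → ℤ) {s i : ℕ} (h : i ≤ s) :
    tterm a {s} i = (((a i + ((s : ℤ) - i) : ℤ) : ℝ) : EReal) := by
  rw [tterm, tval_singleton_of_le h, ← EReal.coe_add]
  push_cast [h]
  ring_nf

lemma tterm_eq_tmin_iff {k i : ℕ} (a : ℕ → ℤ) (S : Set ℕ) (hi : i ∈ range (k + 1)) :
    tterm a S i = tmin k a S ↔ ∀ l ∈ range (k + 1), tterm a S i ≤ tterm a S l :=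
  ⟨fun h l hl => h ▸ iInf₂_le l hl, fun h => le_antisymm (le_iInf₂ h) (iInf₂_le i hi)⟩

lemma isSol_singleton_iff {k s : ℕ} (a : ℕ → ℤ) (hs : k ≤ s) :
    IsSol k a {s} ↔
      ∃ i ∈ range (k + 1), ∃ j ∈ range (k + 1), i ≠ j ∧
        a i + ((s : ℤ) - i) = a j + ((s : ℤ) - j) ∧
        ∀ l ∈ range (k + 1), a i + ((s : ℤ) - i) ≤ a l + ((s : ℤ) - l) := by
  have tterm_le_iff : ∀ i ∈ range (k + 1), ∀ l ∈ range (k + 1),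
      tterm a {s} i ≤ tterm a {s} l ↔ a i + ((s : ℤ) - i) ≤ a l + ((s : ℤ) - l) := by
    intro i hi l hl
    rw [mem_range] at hi hl
    rw [tterm_singleton_of_le a (by omega), tterm_singleton_of_le a (by omega)]
    exact_mod_cast Iff.rfl
  constructor
  · rintro ⟨i, hi, j, hj, hij, hti, htj⟩
    rw [tterm_eq_tmin_iff a _ hi] at hti
    rw [tterm_eq_tmin_iff a _ hj] at htj
    have hij_le := (tterm_le_iff i hi j hj).1 (hti j hj)
    have hji_le := (tterm_le_iff j hj i hi).1 (htj i hi)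
    exact ⟨i, hi, j, hj, hij, le_antisymm hij_le hji_le,
      fun l hl => (tterm_le_iff i hi l hl).1 (hti l hl)⟩
  · rintro ⟨i, hi, j, hj, hij, heq, hmin⟩
    refine ⟨i, hi, j, hj, hij, (tterm_eq_tmin_iff a _ hi).2 fun l hl => ?_,
      (tterm_eq_tmin_iff a _ hj).2 fun l hl => ?_⟩
    · exact (tterm_le_iff i hi l hl).2 (hmin l hl)
    · exact (tterm_le_iff j hj l hl).2 (heq ▸ hmin l hl)

theorem stmt4_general (k : ℕ) (a : ℕ → ℤ) :
    (∃ s : ℕ, k ≤ s ∧ IsSol k a {s}) ↔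
      ∃ i ∈ Finset.range (k + 1), ∃ j ∈ Finset.range (k + 1), i ≠ j ∧
        a i + ((k : ℤ) - i) = a j + ((k : ℤ) - j) ∧
        ∀ l ∈ Finset.range (k + 1), a i + ((k : ℤ) - i) ≤ a l + ((k : ℤ) - l) := by
  constructor
  · rintro ⟨s, hs, hsol⟩
    -- shifting `s` to `k` adds the same constant to every term
    obtain ⟨i, hi, j, hj, hij, heq, hmin⟩ := (isSol_singleton_iff a hs).1 hsol
    exact ⟨i, hi, j, hj, hij, by omega, fun l hl => by linarith [hmin l hl]⟩
  · exact fun h => ⟨k, le_rfl, (isSol_singleton_iff a le_rfl).2 h⟩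

/-- there is a singleton solution `{s}` with `s ≥ k` iff the minimum
in `min_{0 ≤ i ≤ k} {a_i + k - i}` is attained at least twice. -/
theorem stmt4 (k : ℕ) (hk : 1 ≤ k) (a : ℕ → ℤ) :
    (∃ s : ℕ, k ≤ s ∧ IsSol k a {s}) ↔
      ∃ i ∈ Finset.range (k + 1), ∃ j ∈ Finset.range (k + 1), i ≠ j ∧
        a i + ((k : ℤ) - i) = a j + ((k : ℤ) - j) ∧
        ∀ l ∈ Finset.range (k + 1), a i + ((k : ℤ) - i) ≤ a l + ((k : ℤ) - l) :=
  stmt4_general k a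
end

section
/- A tropical linear differential equation P = min_{0≤i≤k}{a_i + u^(i)} has either infinitely many minimal tropical solutions or finitely many; it has infinitely many (i.e., is non-holonomic) if and only if {k} is a tropical solution, i.e., the minimum in min_{0≤i≤k}{a_i + k - i} is attained at least twice. -/
/-! If `{k}` is a solution, so is every `{m}` with `m ≥ k`: its terms `a_i - i + m` differ from
those of `{k}` by a constant. Singletons are minimal, so there are infinitely many minimal
solutions. Conversely, truncating a minimal solution above an element `≥ k` does not change the
terms, so it has at most one such element `s`; if `{k}` is not a solution, dropping `s` destroys
a minimizer `j`, which bounds `s ≤ a_p - a_j + j`. Hence all minimal solutions lie in a fixed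
finite interval. -/

section Tropical

variable {k : ℕ} {a : ℕ → ℤ} {S T : Set ℕ}

lemma tval_le {i d : ℕ} (h : i + d ∈ S) : tval S i ≤ ((d : ℝ) : EReal) :=
  iInf₂_le d h

lemma le_tval {i : ℕ} {x : EReal} (h : ∀ d, i + d ∈ S → x ≤ ((d : ℝ) : EReal)) :
    x ≤ tval S i :=
  le_iInf₂ h

lemma tval_anti (h : T ⊆ S) (i : ℕ) : tval S i ≤ tval T i :=
  le_tval fun _ hd => tval_le (h hd)

lemma tval_eq_of_forall_le {m i : ℕ} (hm : m ∈ S) (him : i ≤ m)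
    (hmin : ∀ x ∈ S, i ≤ x → m ≤ x) : tval S i = (((m - i : ℕ) : ℝ) : EReal) := by
  refine le_antisymm (tval_le (by rwa [Nat.add_sub_cancel' him])) (le_tval fun d hd => ?_)
  have := hmin _ hd (Nat.le_add_right i d)
  exact EReal.coe_le_coe_iff.2 (by exact_mod_cast (by omega : m - i ≤ d))

lemma tval_eq_of_subset {m i : ℕ} (hTS : T ⊆ S) (hm : m ∈ T) (him : i ≤ m)
    (hT : ∀ x ∈ S, x ≤ m → x ∈ T) : tval T i = tval S i := by
  refine le_antisymm (le_tval fun d hd => ?_) (tval_anti hTS i)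
  by_cases hdm : i + d ≤ m
  · exact tval_le (hT _ hd hdm)
  · calc tval T i ≤ (((m - i : ℕ) : ℝ) : EReal) := tval_le (by rwa [Nat.add_sub_cancel' him])
      _ ≤ ((d : ℝ) : EReal) :=
        EReal.coe_le_coe_iff.2 (by exact_mod_cast (by omega : m - i ≤ d))

lemma tterm_anti (h : T ⊆ S) (i : ℕ) : tterm a S i ≤ tterm a T i :=
  add_le_add_right (tval_anti h i) _

lemma tterm_eq_of_forall_le {m i : ℕ} (hm : m ∈ S) (him : i ≤ m)
    (hmin : ∀ x ∈ S, i ≤ x → m ≤ x) :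
    tterm a S i = (((a i + m - i : ℤ) : ℝ) : EReal) := by
  rw [tterm, tval_eq_of_forall_le hm him hmin, ← EReal.coe_add]
  congr 1
  push_cast [him]
  ring

lemma tmin_le {i : ℕ} (hi : i ∈ Finset.range (k + 1)) : tmin k a S ≤ tterm a S i :=
  iInf₂_le i hi

lemma tmin_anti (h : T ⊆ S) : tmin k a S ≤ tmin k a T :=
  iInf₂_mono fun i _ => tterm_anti h i

/-- Terms only grow when passing to a subset, so kept minimizers stay minimizers. -/
lemma IsSol.of_subset (hS : IsSol k a S) (hTS : T ⊆ S)
    (h : ∀ i ∈ Finset.range (k + 1), tterm a S i = tmin k a S → tterm a T i = tterm a S i) :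
    IsSol k a T := by
  have attains {i} (hi : i ∈ Finset.range (k + 1)) (hSi : tterm a S i = tmin k a S) :
      tterm a T i = tmin k a T :=
    le_antisymm
      (calc tterm a T i = tmin k a S := (h i hi hSi).trans hSi
        _ ≤ tmin k a T := tmin_anti hTS)
      (tmin_le hi)
  obtain ⟨i, hi, j, hj, hij, hSi, hSj⟩ := hS
  exact ⟨i, hi, j, hj, hij, attains hi hSi, attains hj hSj⟩

lemma isSol_iff_of_tterm_eq (f : ℕ → ℤ) (hf : ∀ i ∈ Finset.range (k + 1),
      tterm a S i = (((f i : ℤ) : ℝ) : EReal)) :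
    IsSol k a S ↔ ∃ i ∈ Finset.range (k + 1), ∃ j ∈ Finset.range (k + 1), i ≠ j ∧
      (∀ l ∈ Finset.range (k + 1), f i ≤ f l) ∧
      (∀ l ∈ Finset.range (k + 1), f j ≤ f l) := by
  have attains {i} (hi : i ∈ Finset.range (k + 1)) :
      tterm a S i = tmin k a S ↔ ∀ l ∈ Finset.range (k + 1), f i ≤ f l := by
    refine ⟨fun h l hl => ?_, fun h => le_antisymm (le_iInf₂ fun l hl => ?_) (tmin_le hi)⟩
    · have := h ▸ tmin_le (a := a) (S := S) hl
      rwa [hf i hi, hf l hl, EReal.coe_le_coe_iff, Int.cast_le] at this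
    · rw [hf i hi, hf l hl, EReal.coe_le_coe_iff, Int.cast_le]
      exact h l hl
  unfold IsSol
  refine exists_congr fun i => and_congr_right fun hi => exists_congr fun j =>
    and_congr_right fun hj => and_congr_right fun _ => and_congr (attains hi) (attains hj)

lemma isSol_singleton_iff_s5 {m : ℕ} (hkm : k ≤ m) : IsSol k a {m} ↔ IsSol k a {k} := by
  have key {m} (hkm : k ≤ m) : IsSol k a {m} ↔
      ∃ i ∈ Finset.range (k + 1), ∃ j ∈ Finset.range (k + 1), i ≠ j ∧
        (∀ l ∈ Finset.range (k + 1), a i - i ≤ a l - l) ∧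
        (∀ l ∈ Finset.range (k + 1), a j - j ≤ a l - l) := by
    refine (isSol_iff_of_tterm_eq (fun i => a i - i + m) fun i hi => ?_).trans ?_
    · rw [tterm_eq_of_forall_le (Set.mem_singleton m)
        ((Nat.le_of_lt_succ (Finset.mem_range.1 hi)).trans hkm)
        fun _ hx _ => (Set.mem_singleton_iff.1 hx).ge]
      congr 2
      ring
    · simp only [add_le_add_iff_right]
  rw [key hkm, key le_rfl]

lemma IsMinSol.of_isSol_singleton {m : ℕ} (h : IsSol k a {m}) : IsMinSol k a {m} :=
  ⟨Set.singleton_nonempty m, h, fun _ hT hTne _ =>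
    (Set.subset_singleton_iff_eq.1 hT).resolve_left hTne.ne_empty⟩

/-- Cutting `S` off above an element `q ≥ k` keeps every term `a_i + val_S(i)`, `i ≤ k`. -/
lemma IsMinSol.le_of_mem (hS : IsMinSol k a S) {x q : ℕ} (hx : x ∈ S) (hq : q ∈ S)
    (hkq : k ≤ q) : x ≤ q := by
  have hsol : IsSol k a (S ∩ Set.Iic q) :=
    hS.2.1.of_subset Set.inter_subset_left fun i hi _ => by
      have hiq : i ≤ q := (Nat.le_of_lt_succ (Finset.mem_range.1 hi)).trans hkq
      rw [tterm, tterm, tval_eq_of_subset Set.inter_subset_left ⟨hq, Set.mem_Iic.2 le_rfl⟩ hiq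
        fun _ hy hyq => ⟨hy, hyq⟩]
  rw [← hS.2.2 _ Set.inter_subset_left ⟨q, hq, Set.mem_Iic.2 le_rfl⟩ hsol] at hx
  exact hx.2

/-- A minimal solution has at most one element `s ≥ k`. Dropping it leaves a nonempty set
`F ⊆ [0, k)` that is not a solution, so some minimizing index `j` of `S` sees no element of
`F` at or above it; comparing its term `a_j + s - j` with the term `a_p` of any `p ∈ F`
bounds `s`. -/
lemma IsMinSol.exists_le_of_not_isSol (hns : ¬ IsSol k a {k}) (hS : IsMinSol k a S) {s : ℕ}
    (hs : s ∈ S) (hks : k ≤ s) :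
    ∃ p ∈ Finset.range (k + 1), ∃ j ∈ Finset.range (k + 1), (s : ℤ) ≤ a p - a j + j := by
  set F := S ∩ Set.Iio k
  have hFS : F ⊆ S := Set.inter_subset_left
  have eq_s {x} (hx : x ∈ S) (hkx : k ≤ x) : x = s :=
    le_antisymm (hS.le_of_mem hx hs hks) (hS.le_of_mem hs hx hkx)
  obtain ⟨p, hpS, hpk⟩ : F.Nonempty := by
    by_contra hF
    have hSs : S = {s} := Set.eq_singleton_iff_unique_mem.2
      ⟨hs, fun x hx => eq_s hx (not_lt.1 fun hxk => hF ⟨x, hx, hxk⟩)⟩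
    exact hns ((isSol_singleton_iff_s5 hks).1 (hSs ▸ hS.2.1))
  obtain ⟨j, hj, hSj, hFj⟩ : ∃ j ∈ Finset.range (k + 1),
      tterm a S j = tmin k a S ∧ tterm a F j ≠ tterm a S j := by
    by_contra! h
    have hFeq : F = S := hS.2.2 F hFS ⟨p, hpS, hpk⟩ (hS.2.1.of_subset hFS h)
    have hsF : s ∈ F := hFeq ▸ hs
    exact absurd hsF.2 (not_lt.2 hks)
  have hjk : j ≤ k := Nat.le_of_lt_succ (Finset.mem_range.1 hj)
  have hsj : ∀ x ∈ S, j ≤ x → s ≤ x := by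
    intro x hx hjx
    by_contra hxs
    have hxk : x < k := lt_of_not_ge fun hkx => hxs (eq_s hx hkx).ge
    refine hFj ?_
    rw [tterm, tterm,
      tval_eq_of_subset hFS ⟨hx, hxk⟩ hjx fun _ hy hyx => ⟨hy, hyx.trans_lt hxk⟩]
  have hp : p ∈ Finset.range (k + 1) := Finset.mem_range.2 (Nat.lt_succ_of_lt hpk)
  have hle : tterm a S j ≤ tterm a S p := hSj ▸ tmin_le hp
  rw [tterm_eq_of_forall_le hs (by omega) hsj, tterm_eq_of_forall_le hpS le_rfl fun _ _ h => h,
    EReal.coe_le_coe_iff, Int.cast_le] at hle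
  exact ⟨p, hp, j, hj, by omega⟩

lemma finite_setOf_isMinSol (hns : ¬ IsSol k a {k}) : {S | IsMinSol k a S}.Finite := by
  obtain ⟨B, hB⟩ : ∃ B : ℕ, ∀ p ∈ Finset.range (k + 1), ∀ j ∈ Finset.range (k + 1),
      (a p - a j + j).toNat ≤ B :=
    ⟨_, fun p hp j hj =>
      Finset.le_sup (f := fun pj : ℕ × ℕ => (a pj.1 - a pj.2 + pj.2).toNat) (b := (p, j))
        (Finset.mem_product.2 ⟨hp, hj⟩)⟩
  refine (Set.finite_Iic (k + B)).finite_subsets.subset fun S hS s hs => Set.mem_Iic.2 ?_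
  rcases lt_or_ge s k with hsk | hks
  · omega
  obtain ⟨p, hp, j, hj, hsle⟩ := IsMinSol.exists_le_of_not_isSol hns hS hs hks
  have := hB p hp j hj
  omega

lemma infinite_setOf_isMinSol (hsol : IsSol k a {k}) : {S | IsMinSol k a S}.Infinite :=
  Set.infinite_of_injective_forall_mem (f := fun n : ℕ => ({k + n} : Set ℕ))
    (fun _ _ h => Nat.add_left_cancel (Set.singleton_eq_singleton_iff.1 h))
    fun n => IsMinSol.of_isSol_singleton ((isSol_singleton_iff_s5 (Nat.le_add_right k n)).2 hsol)

end Tropical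

theorem stmt5_general (k : ℕ) (a : ℕ → ℤ) :
    {S : Set ℕ | IsMinSol k a S}.Infinite ↔ IsSol k a {k} :=
  ⟨fun hinf => by_contra fun hns => hinf (finite_setOf_isMinSol hns), infinite_setOf_isMinSol⟩

/-- the equation has infinitely many minimal tropical solutions
(is non-holonomic) iff `{k}` is a tropical solution. -/
theorem stmt5 (k : ℕ) (hk : 1 ≤ k) (a : ℕ → ℤ) :
    {S : Set ℕ | IsMinSol k a S}.Infinite ↔ IsSol k a {k} :=
  stmt5_general k a
end

section
/- Every tropical linear differential equation P = min_{0≤i≤k}{a_i + u^(i)} has either a nonempty tropical solution or a nonempty tropical solution at infinity. -/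
/-- `val_S^∞(i)`: `max S` for `i = 0`, and `max { s - i : s ∈ S, s ≤ -1 }` for
`i ≥ 1` (with `-∞` if no such `s` exists). -/
noncomputable def tvalInf (S : Set ℤ) (i : ℕ) : EReal :=
  if i = 0 then ⨆ (s : ℤ) (_ : s ∈ S), ((s : ℝ) : EReal)
  else ⨆ (s : ℤ) (_ : s ∈ S ∧ s ≤ -1), (((s : ℝ) - (i : ℝ)) : EReal)

/-- The term `a_i + val_S^∞(i)`. -/
noncomputable def ttermInf (a : ℕ → ℤ) (S : Set ℤ) (i : ℕ) : EReal :=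
  ((a i : ℝ) : EReal) + tvalInf S i

/-- `max_{0 ≤ i ≤ k} { a_i + val_S^∞(i) }`. -/
noncomputable def tmax (k : ℕ) (a : ℕ → ℤ) (S : Set ℤ) : EReal :=
  ⨆ i ∈ Finset.range (k + 1), ttermInf a S i

/-- `S ⊆ ℤ≤0` is a tropical solution at infinity: the maximum is attained for at
least two values of `i`. -/
def IsSolInf (k : ℕ) (a : ℕ → ℤ) (S : Set ℤ) : Prop :=
  ∃ i ∈ Finset.range (k + 1), ∃ j ∈ Finset.range (k + 1),
    i ≠ j ∧ ttermInf a S i = tmax k a S ∧ ttermInf a S j = tmax k a S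

/-!
If `a₁ ≤ a₀`, take `S = {0, t}`. Then `a₀ + val_S(0) = a₀`, and for `1 ≤ i ≤ t` the term
`a_i + val_S(i) = a_i + t - i` grows by exactly one when `t` does, while terms with `i > t` are `∞`.
Starting from `a₁ ≤ a₀` at `t = 1`, the least `t` for which all these terms are `≥ a₀` makes one of
them equal to `a₀`.

If `a₀ < a₁`, let `M = max_{1 ≤ i ≤ k} (a_i - i) ≥ a₁ - 1 ≥ a₀`. The terms at infinity of
`S = {c, 0}` with `c ≤ -1` are `a₀` and `a_i + c - i`, so `c = a₀ - M` balances them when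
`a₀ < M`; when `a₀ = M`, the set `S = {-1}` shifts all terms by `-1` and does the same.
-/

open Finset

section Valuation

lemma tval_eq_of_isLeast {S : Set ℕ} {i d₀ : ℕ} (h : IsLeast {d | i + d ∈ S} d₀) :
    tval S i = ((d₀ : ℝ) : EReal) :=
  le_antisymm (iInf₂_le d₀ h.1) (le_iInf₂ fun _ hd => by exact_mod_cast h.2 hd)

lemma tval_eq_top {S : Set ℕ} {i : ℕ} (h : ∀ d, i + d ∉ S) : tval S i = ⊤ := by
  simp [tval, h]

lemma tvalInf_zero_of_isGreatest {S : Set ℤ} {s : ℤ} (h : IsGreatest S s) :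
    tvalInf S 0 = ((s : ℝ) : EReal) := by
  rw [tvalInf, if_pos rfl]
  exact le_antisymm (iSup₂_le fun _ hx => by exact_mod_cast h.2 hx) (le_iSup₂_of_le s h.1 le_rfl)

lemma tvalInf_of_isGreatest {S : Set ℤ} {c : ℤ} {i : ℕ} (hi : i ≠ 0)
    (h : IsGreatest {x ∈ S | x ≤ -1} c) : tvalInf S i = (((c : ℝ) - i : ℝ) : EReal) := by
  rw [tvalInf, if_neg hi]
  refine le_antisymm (iSup₂_le fun x hx => ?_) (le_iSup₂_of_le c h.1 le_rfl)
  have hxc : (x : ℝ) ≤ c := by exact_mod_cast h.2 hx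
  exact EReal.coe_le_coe_iff.2 (by linarith)

end Valuation

section Solution

variable {k : ℕ} {a : ℕ → ℤ}

lemma isSol_of_forall_le {S : Set ℕ} {i j : ℕ} (hi : i ≤ k) (hj : j ≤ k) (hij : i ≠ j)
    (heq : tterm a S j = tterm a S i) (hle : ∀ l ≤ k, tterm a S i ≤ tterm a S l) :
    IsSol k a S := by
  have hmin : tmin k a S = tterm a S i :=
    le_antisymm (iInf₂_le i (mem_range.2 (by omega)))
      (le_iInf₂ fun l hl => hle l (Nat.lt_succ_iff.1 (mem_range.1 hl)))
  exact ⟨i, mem_range.2 (by omega), j, mem_range.2 (by omega), hij, hmin.symm, heq.trans hmin.symm⟩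

lemma isSolInf_of_forall_le {S : Set ℤ} {i j : ℕ} (hi : i ≤ k) (hj : j ≤ k) (hij : i ≠ j)
    (heq : ttermInf a S j = ttermInf a S i) (hle : ∀ l ≤ k, ttermInf a S l ≤ ttermInf a S i) :
    IsSolInf k a S := by
  have hmax : tmax k a S = ttermInf a S i :=
    le_antisymm (iSup₂_le fun l hl => hle l (Nat.lt_succ_iff.1 (mem_range.1 hl)))
      (le_iSup₂_of_le i (mem_range.2 (by omega)) le_rfl)
  exact ⟨i, mem_range.2 (by omega), j, mem_range.2 (by omega), hij, hmax.symm, heq.trans hmax.symm⟩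

end Solution

section FiniteSolution

variable {k : ℕ} {a : ℕ → ℤ} {t : ℕ}

lemma tterm_pair_zero : tterm a {0, t} 0 = ((a 0 : ℝ) : EReal) := by
  rw [tterm, tval_eq_of_isLeast (d₀ := 0) ⟨by simp, fun d _ => d.zero_le⟩]
  simp

lemma tterm_pair_of_le {i : ℕ} (hi : 1 ≤ i) (hit : i ≤ t) :
    tterm a {0, t} i = (((a i + t - i : ℤ) : ℝ) : EReal) := by
  have hval : IsLeast {d | i + d ∈ ({0, t} : Set ℕ)} (t - i) :=
    ⟨by simp [Nat.add_sub_cancel' hit], fun d hd => by simp at hd; omega⟩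
  rw [tterm, tval_eq_of_isLeast hval, ← EReal.coe_add]
  congr 1
  push_cast [Nat.cast_sub hit]
  ring

lemma tterm_pair_of_lt {i : ℕ} (hti : t < i) : tterm a {0, t} i = ⊤ := by
  rw [tterm, tval_eq_top fun d hd => by simp at hd; omega]
  exact EReal.coe_add_top _

lemma isSol_pair {j : ℕ} (hj : 1 ≤ j) (hjt : j ≤ t) (hjk : j ≤ k) (hja : a j + t - j = a 0)
    (hle : ∀ i, 1 ≤ i → i ≤ t → i ≤ k → a 0 ≤ a i + t - i) : IsSol k a {0, t} := by
  refine isSol_of_forall_le (Nat.zero_le k) hjk (by omega) ?_ fun l hl => ?_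
  · rw [tterm_pair_of_le hj hjt, hja, tterm_pair_zero]
  · rw [tterm_pair_zero]
    rcases Nat.eq_zero_or_pos l with rfl | hl0
    · rw [tterm_pair_zero]
    rcases le_or_gt l t with hlt | htl
    · rw [tterm_pair_of_le hl0 hlt]
      exact_mod_cast hle l hl0 hlt hl
    · rw [tterm_pair_of_lt htl]
      exact le_top

lemma exists_forall_le_add_sub (k : ℕ) (a : ℕ → ℤ) :
    ∃ t : ℕ, 1 ≤ t ∧ ∀ i, 1 ≤ i → i ≤ t → i ≤ k → a 0 ≤ a i + t - i := by
  obtain ⟨N, hN⟩ := ((range (k + 1)).image fun i => (a 0 - a i + i).toNat).exists_le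
  refine ⟨N + 1, by omega, fun i _ _ hik => ?_⟩
  have hi := hN _ (mem_image_of_mem _ (mem_range.2 (Nat.lt_succ_of_le hik)))
  have := Int.self_le_toNat (a 0 - a i + i)
  omega

lemma exists_pair_crossing (hk : 1 ≤ k) (ha : a 1 ≤ a 0) :
    ∃ t j : ℕ, 1 ≤ j ∧ j ≤ t ∧ j ≤ k ∧ a j + t - j = a 0 ∧
      ∀ i, 1 ≤ i → i ≤ t → i ≤ k → a 0 ≤ a i + t - i := by
  classical
  have hex := exists_forall_le_add_sub k a
  obtain ⟨ht, hle⟩ := Nat.find_spec hex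
  have hmin := Nat.find_min hex (m := Nat.find hex - 1)
  generalize Nat.find hex = t at ht hle hmin
  refine ⟨t, ?_⟩
  rcases ht.eq_or_lt with rfl | hgt
  · have := hle 1 le_rfl le_rfl hk
    exact ⟨1, le_rfl, le_rfl, hk, by omega, hle⟩
  · have hnot := hmin (by omega)
    push Not at hnot
    obtain ⟨i, hi, hit, hik, hlt⟩ := hnot (by omega)
    refine ⟨i, hi, by omega, hik, le_antisymm (by omega) (hle i hi (by omega) hik), hle⟩

lemma exists_isSol_of_le (hk : 1 ≤ k) (ha : a 1 ≤ a 0) :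
    ∃ S : Set ℕ, S.Nonempty ∧ IsSol k a S := by
  obtain ⟨t, j, hj, hjt, hjk, hja, hle⟩ := exists_pair_crossing hk ha
  exact ⟨{0, t}, Set.insert_nonempty _ _, isSol_pair hj hjt hjk hja hle⟩

end FiniteSolution

section SolutionAtInfinity

variable {k : ℕ} {a : ℕ → ℤ}

lemma isSolInf_of_isGreatest {S : Set ℤ} {s c : ℤ} {j : ℕ} (hs : IsGreatest S s)
    (hc : IsGreatest {x ∈ S | x ≤ -1} c) (hj : 1 ≤ j) (hjk : j ≤ k) (hja : a j + c - j = a 0 + s)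
    (hle : ∀ i, 1 ≤ i → i ≤ k → a i + c - i ≤ a 0 + s) : IsSolInf k a S := by
  have hterm : ∀ i, i ≠ 0 → ttermInf a S i = (((a i + c - i : ℤ) : ℝ) : EReal) := by
    intro i hi
    rw [ttermInf, tvalInf_of_isGreatest hi hc, ← EReal.coe_add]
    congr 1
    push_cast
    ring
  have hterm0 : ttermInf a S 0 = (((a 0 + s : ℤ) : ℝ) : EReal) := by
    rw [ttermInf, tvalInf_zero_of_isGreatest hs, ← EReal.coe_add]
    push_cast
    rfl
  refine isSolInf_of_forall_le (Nat.zero_le k) hjk (by omega) ?_ fun l hl => ?_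
  · rw [hterm j (by omega), hja, hterm0]
  · rcases Nat.eq_zero_or_pos l with rfl | hl0
    · exact le_rfl
    · rw [hterm l hl0.ne', hterm0]
      exact_mod_cast hle l hl0 hl

lemma exists_isSolInf_of_lt (hk : 1 ≤ k) (ha : a 0 < a 1) :
    ∃ S : Set ℤ, S.Nonempty ∧ (∀ s ∈ S, s ≤ 0) ∧ IsSolInf k a S := by
  obtain ⟨j, hjmem, hmax⟩ := (Icc 1 k).exists_max_image (fun i => a i - (i : ℤ))
    ⟨1, mem_Icc.2 ⟨le_rfl, hk⟩⟩
  obtain ⟨hj, hjk⟩ := mem_Icc.1 hjmem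
  have hle : ∀ i, 1 ≤ i → i ≤ k → a i - i ≤ a j - j := fun i hi hik => hmax i (mem_Icc.2 ⟨hi, hik⟩)
  have hj0 : a 0 ≤ a j - j := by have := hle 1 le_rfl hk; omega
  rcases hj0.eq_or_lt with heq | hlt
  · refine ⟨{-1}, Set.singleton_nonempty _, by simp, ?_⟩
    refine isSolInf_of_isGreatest isGreatest_singleton
      ⟨⟨rfl, le_rfl⟩, fun x hx => (Set.mem_singleton_iff.1 hx.1).le⟩ hj hjk (by omega)
      fun i hi hik => ?_
    have := hle i hi hik
    omega
  · set c := a 0 - (a j - j)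
    have hc : IsGreatest {x ∈ ({c, 0} : Set ℤ) | x ≤ -1} c :=
      ⟨⟨by simp, by omega⟩, fun x ⟨hx, hx1⟩ => by simp at hx; omega⟩
    refine ⟨{c, 0}, Set.insert_nonempty _ _, fun x hx => by simp at hx; omega, ?_⟩
    refine isSolInf_of_isGreatest (s := 0) ⟨by simp, fun x hx => by simp at hx; omega⟩ hc hj hjk
      (by omega) fun i hi hik => ?_
    have := hle i hi hik
    omega

end SolutionAtInfinity

/-- every TLDE has either a nonempty tropical solution or a
nonempty tropical solution at infinity. -/
theorem stmt9 (k : ℕ) (hk : 1 ≤ k) (a : ℕ → ℤ) :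
    (∃ S : Set ℕ, S.Nonempty ∧ IsSol k a S) ∨
      (∃ S : Set ℤ, S.Nonempty ∧ (∀ s ∈ S, s ≤ 0) ∧ IsSolInf k a S) := by
  rcases le_or_gt (a 1) (a 0) with ha | ha
  · exact Or.inl (exists_isSol_of_le hk ha)
  · exact Or.inr (exists_isSolInf_of_lt hk ha)
end
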